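/- The short exact sequence 1 → G_12 → G_24 → Z/2 → 1, where G_12 = ⟨s, t⟩ ≅ C_3 ⋊ C_4 and the quotient Z/2 is generated by the image of ψ, does not split: there is no subgroup of order 2 in G_24 mapping isomorphically to the quotient. -/

import Mathlib

noncomputable section

/-- The group `G₂₄`, presented with generators `s, t, ψ` (encoded as `0, 1, 2`) and
relations `s³ = 1`, `t⁴ = 1`, `tst⁻¹ = s²`, `ψs = sψ`, `tψ = ψt³`, `ψ² = t²`. -/
def G24rels : Set (FreeGroup (Fin 3)) :=
  { FreeGroup.of 0 ^ 3, FreeGroup.of 1 ^ 4,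
    FreeGroup.of 1 * FreeGroup.of 0 * (FreeGroup.of 1)⁻¹ * (FreeGroup.of 0 ^ 2)⁻¹,
    FreeGroup.of 2 * FreeGroup.of 0 * (FreeGroup.of 0 * FreeGroup.of 2)⁻¹,
    FreeGroup.of 1 * FreeGroup.of 2 * (FreeGroup.of 2 * FreeGroup.of 1 ^ 3)⁻¹,
    FreeGroup.of 2 ^ 2 * (FreeGroup.of 1 ^ 2)⁻¹ }

/-- The group `G₂₄` as a presented group. -/
abbrev G24 := PresentedGroup G24rels

/-- The subgroup `G₁₂ = ⟨s, t⟩ ≅ C₃ ⋊ C₄` of `G₂₄`. -/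
def G12 : Subgroup G24 :=
  Subgroup.closure {PresentedGroup.of (rels := G24rels) 0, PresentedGroup.of 1}

/-!
Send `s, t, ψ` to `a⁴, x, a⁹` in the dicyclic group `⟨a, x | a¹² = 1, x² = a⁶, x a x⁻¹ = a⁻¹⟩`
of order 24 and take the parity of the exponent of `a`: this is a homomorphism `G₂₄ → ℤ/2` that
kills `s` and `t` but not `ψ`. As `ψ` normalises `G₁₂` and `ψ² = t² ∈ G₁₂`, every element of
`G₂₄` lies in `G₁₂` or in `G₁₂ ψ`, so `G₁₂` is exactly the kernel and has index 2. The only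
involution of the dicyclic group is `a⁶`, of even exponent, so every involution of `G₂₄` lies in
`G₁₂` and no subgroup of order 2 maps onto the quotient.
-/

namespace QuaternionGroup
variable {n : ℕ}

def parity (hn : Even n) : QuaternionGroup n →* Multiplicative (ZMod 2) where
  toFun
    | a i => .ofAdd (ZMod.castHom (dvd_mul_right 2 n) (ZMod 2) i)
    | xa i => .ofAdd (ZMod.castHom (dvd_mul_right 2 n) (ZMod 2) i)
  map_one' := by rw [one_def]; simp
  map_mul' := by
    rintro (i | i) (j | j) <;>
      simp only [a_mul_a, a_mul_xa, xa_mul_a, xa_mul_xa, map_add, map_sub, map_natCast,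
        hn.natCast_zmod_two, ← ofAdd_add, CharTwo.sub_eq_add, zero_add, add_comm]

theorem parity_eq_one_of_mul_self_eq_one (hn : Even n) [NeZero n] {m : QuaternionGroup n}
    (hm : m * m = 1) : parity hn m = 1 := by
  cases m with
  | xa i =>
    have := orderOf_dvd_of_pow_eq_one (x := xa i) (n := 2) (by rwa [sq])
    rw [orderOf_xa] at this
    norm_num at this
  | a i =>
    rw [a_mul_a, one_def, a.injEq] at hm
    have h2n : 2 * n ∣ 2 * i.val := by
      rw [← ZMod.natCast_eq_zero_iff]
      simp [two_mul, hm]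
    have hi : Even i.val :=
      even_iff_two_dvd.mpr (hn.two_dvd.trans (Nat.dvd_of_mul_dvd_mul_left two_pos h2n))
    show Multiplicative.ofAdd _ = 1
    simp [ZMod.cast_eq_val, hi.natCast_zmod_two]

end QuaternionGroup

namespace Subgroup
variable {G : Type*} [Group G]

theorem mem_or_mul_inv_mem_of_mem_closure_insert {H : Subgroup G} {p : G}
    (hconj : ∀ h ∈ H, p * h * p⁻¹ ∈ H) (hsq : p ^ 2 ∈ H) {x : G}
    (hx : x ∈ closure (insert p (H : Set G))) : x ∈ H ∨ x * p⁻¹ ∈ H := by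
  induction hx using closure_induction with
  | mem x hx =>
    rcases hx with rfl | hx
    · exact Or.inr (by simp)
    · exact Or.inl hx
  | one => exact Or.inl H.one_mem
  | mul x y _ _ hx hy =>
    rcases hx with hx | hx <;> rcases hy with hy | hy
    · exact Or.inl (mul_mem hx hy)
    · exact Or.inr (by simpa [mul_assoc] using mul_mem hx hy)
    · exact Or.inr (by convert mul_mem hx (hconj y hy) using 1; group)
    · exact Or.inl (by convert mul_mem (mul_mem hx (hconj _ hy)) hsq using 1; group)
  | inv x _ hx =>
    rcases hx with hx | hx
    · exact Or.inl (inv_mem hx)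
    · exact Or.inr (by convert inv_mem (mul_mem (hconj _ hx) hsq) using 1; group)

theorem not_injective_mk_of_card_eq_two {H K : Subgroup G}
    (hH : ∀ x : G, x * x = 1 → x ∈ H) (hK : Nat.card K = 2) :
    ¬ Function.Injective (fun k : K => (QuotientGroup.mk k.val : G ⧸ H)) := by
  intro hinj
  have : Finite K := Nat.finite_of_card_ne_zero (by omega)
  obtain ⟨x, hx⟩ := exists_prime_orderOf_dvd_card' 2 (by rw [hK])
  have hx1 : x ≠ 1 := by
    rintro rfl
    simp at hx
  have hxx : (x : G) * x = 1 := by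
    rw [← coe_mul, ← sq, ← hx, pow_orderOf_eq_one, coe_one]
  refine hx1 (hinj ?_)
  simpa [QuotientGroup.eq] using hH x hxx

end Subgroup

namespace G24
open QuaternionGroup

def s : G24 := PresentedGroup.of 0
def t : G24 := PresentedGroup.of 1
def ψ : G24 := PresentedGroup.of 2

theorem G12_eq_closure : G12 = Subgroup.closure {s, t} := rfl

theorem s_mem_G12 : s ∈ G12 := Subgroup.subset_closure (.inl rfl)

theorem t_mem_G12 : t ∈ G12 := Subgroup.subset_closure (.inr rfl)

theorem ψ_mul_s : ψ * s = s * ψ :=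
  PresentedGroup.mk_eq_mk_of_mul_inv_mem (by simp [G24rels])

theorem t_mul_ψ : t * ψ = ψ * t ^ 3 :=
  PresentedGroup.mk_eq_mk_of_mul_inv_mem (by simp [G24rels])

theorem ψ_sq : ψ ^ 2 = t ^ 2 :=
  PresentedGroup.mk_eq_mk_of_mul_inv_mem (by simp [G24rels])

theorem ψ_conj_t : ψ * t * ψ⁻¹ = t⁻¹ := by
  have h3 : ψ * t ^ 3 * ψ⁻¹ = t := by rw [← t_mul_ψ]; group
  have h2 : ψ * t ^ 2 * ψ⁻¹ = t ^ 2 := by rw [← ψ_sq]; group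
  calc ψ * t * ψ⁻¹ = (ψ * t ^ 3 * ψ⁻¹) * (ψ * t ^ 2 * ψ⁻¹)⁻¹ := by group
    _ = t⁻¹ := by rw [h3, h2]; group

theorem ψ_conj_mem_G12 {g : G24} (hg : g ∈ G12) : ψ * g * ψ⁻¹ ∈ G12 := by
  rw [G12_eq_closure] at hg ⊢
  induction hg using Subgroup.closure_induction with
  | mem x hx =>
    rcases hx with rfl | rfl
    · rw [ψ_mul_s, mul_inv_cancel_right]
      exact s_mem_G12
    · rw [ψ_conj_t]
      exact inv_mem t_mem_G12
  | one => simp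
  | mul x y _ _ hx hy => convert mul_mem hx hy using 1; group
  | inv x _ hx => convert inv_mem hx using 1; group

theorem mem_closure_insert_ψ_G12 (x : G24) :
    x ∈ Subgroup.closure (insert ψ (G12 : Set G24)) := by
  refine PresentedGroup.generated_by _ _ (fun j => ?_) x
  fin_cases j
  · exact Subgroup.subset_closure (.inr s_mem_G12)
  · exact Subgroup.subset_closure (.inr t_mem_G12)
  · exact Subgroup.subset_closure (.inl rfl)

def toDicyclic : G24 →* QuaternionGroup 6 :=
  PresentedGroup.toGroup (f := ![a 4, xa 0, a 9]) <| by
    simp [G24rels]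
    decide

def parity : G24 →* Multiplicative (ZMod 2) :=
  (QuaternionGroup.parity (by decide)).comp toDicyclic

theorem parity_ψ : parity ψ = .ofAdd 1 := rfl

theorem G12_le_ker_parity : G12 ≤ parity.ker := by
  rw [G12_eq_closure, Subgroup.closure_le]
  rintro _ (rfl | rfl) <;> rfl

theorem G12_eq_ker_parity : G12 = parity.ker := by
  refine le_antisymm G12_le_ker_parity fun x hx => ?_
  refine (Subgroup.mem_or_mul_inv_mem_of_mem_closure_insert (fun _ => ψ_conj_mem_G12)
    (ψ_sq ▸ pow_mem t_mem_G12 2) (mem_closure_insert_ψ_G12 x)).resolve_right fun h => ?_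
  have := G12_le_ker_parity h
  rw [MonoidHom.mem_ker, map_mul, map_inv, hx, parity_ψ] at this
  exact absurd this (by decide)

theorem parity_surjective : Function.Surjective parity := by
  intro z
  rcases (by revert z; decide : ∀ z : Multiplicative (ZMod 2), z = 1 ∨ z = .ofAdd 1) z
    with rfl | rfl
  exacts [⟨1, map_one _⟩, ⟨ψ, parity_ψ⟩]

theorem index_G12 : G12.index = 2 := by
  rw [G12_eq_ker_parity, Subgroup.index_ker, MonoidHom.range_eq_top.mpr parity_surjective,
    Subgroup.card_top, Nat.card_eq_fintype_card, Fintype.card_multiplicative, ZMod.card]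

theorem mem_G12_of_mul_self_eq_one {x : G24} (hx : x * x = 1) : x ∈ G12 := by
  rw [G12_eq_ker_parity, MonoidHom.mem_ker]
  exact parity_eq_one_of_mul_self_eq_one (by decide) (by rw [← map_mul, hx, map_one])

end G24

/-- the short exact sequence `1 → G₁₂ → G₂₄ → Z/2 → 1` does not split:
`G₁₂` is normal of index 2, and there is no subgroup of order 2 of `G₂₄` mapping
isomorphically (bijectively) onto the quotient `G₂₄/G₁₂`. -/
theorem G24_extension_does_not_split :
    G12.Normal ∧ Nat.card (G24 ⧸ G12) = 2 ∧
      ¬ ∃ H : Subgroup G24, Nat.card ↥H = 2 ∧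
        Function.Bijective (fun h : ↥H => (QuotientGroup.mk h.val : G24 ⧸ G12)) := by
  refine ⟨Subgroup.normal_of_index_eq_two G24.index_G12, G24.index_G12, ?_⟩
  rintro ⟨H, hH, hbij⟩
  exact Subgroup.not_injective_mk_of_card_eq_two (fun _ => G24.mem_G12_of_mul_self_eq_one) hH
    hbij.injective

end
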